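/- Let c be a nice χ-coloring of a connected graph G with level partition (V_1,…,V_k) of D_c. Then every vertex of level at least χ (i.e., lying in V_i for some i ≥ χ) is the beginning of a directed path on χ vertices in D_c; hence the set B_c of vertices having no colorful path satisfies B_c ⊆ V_2 ∪ V_3 ∪ … ∪ V_{χ-1}. -/

import Mathlib

/-!
Colours increase by one along every arc of `D_c`, so a directed path on at most `χ` vertices is
colourful; in particular every vertex of level at least `χ` starts a colourful path. A longest
path from any vertex ends at a sink, hence at `r`, so `c x = c r - (level x - 1)`: adjacent
vertices lie in different levels and `level - 1` is a proper colouring. As `χ(G) = χ`, some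
vertex has level at least `χ`, and the last `χ` vertices of a longest path from it, read
backwards, form a colourful path starting at `r`, the only vertex of level `1`.
-/

/-- A directed cycle: a closed walk of positive length in the digraph `D`. -/
def HasDCycle {V : Type} (D : V → V → Prop) : Prop :=
  ∃ (x : V) (l : List V), List.Chain D x (l ++ [x])

/-- `x` lies in the `i`-th level of the level partition of the (acyclic)
digraph `D`: the longest directed path starting at `x` has `i` vertices. -/
def InLevel {V : Type} (D : V → V → Prop) (x : V) (i : ℕ) : Prop :=
  (∃ l : List V, l.Chain' D ∧ l.head? = some x ∧ l.length = i) ∧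
  ¬ (∃ l : List V, l.Chain' D ∧ l.head? = some x ∧ l.length = i + 1)

section Digraph

variable {V : Type} {D : V → V → Prop}

def StartsPath (D : V → V → Prop) (x : V) (n : ℕ) : Prop :=
  ∃ l : List V, l.IsChain D ∧ l.head? = some x ∧ l.length = n

theorem inLevel_iff {x : V} {i : ℕ} :
    InLevel D x i ↔ StartsPath D x i ∧ ¬ StartsPath D x (i + 1) :=
  Iff.rfl

theorem startsPath_one (D : V → V → Prop) (x : V) : StartsPath D x 1 :=
  ⟨[x], .singleton x, rfl, rfl⟩

theorem StartsPath.mono {x : V} {m n : ℕ} (h : StartsPath D x n) (hm : 0 < m) (hmn : m ≤ n) :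
    StartsPath D x m := by
  obtain ⟨l, hl, hx, rfl⟩ := h
  obtain ⟨t, rfl⟩ := List.head?_eq_some_iff.1 hx
  obtain ⟨k, rfl⟩ := Nat.exists_eq_add_one_of_ne_zero hm.ne'
  exact ⟨(x :: t).take (k + 1), hl.take _, rfl, List.length_take_of_le hmn⟩

theorem List.IsChain.nodup_of_not_hasDCycle (hD : ¬ HasDCycle D) {l : List V}
    (hl : l.IsChain D) : l.Nodup := by
  induction l with
  | nil => exact List.nodup_nil
  | cons a t ih =>
    refine List.nodup_cons.2 ⟨fun ha => hD ?_, ih hl.of_cons⟩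
    obtain ⟨s, u, rfl⟩ := List.append_of_mem ha
    have hcycle : (a :: (s ++ a :: u)).take (s.length + 2) = a :: (s ++ [a]) := by
      simp [List.take_append]
    have hchain := hl.take (s.length + 2)
    rw [hcycle] at hchain
    exact ⟨a, s, hchain⟩

theorem StartsPath.le_card [Fintype V] (hD : ¬ HasDCycle D) {x : V} {n : ℕ}
    (h : StartsPath D x n) : n ≤ Fintype.card V := by
  obtain ⟨l, hl, -, rfl⟩ := h
  exact (hl.nodup_of_not_hasDCycle hD).length_le_card

open Classical in
/-- The number of vertices of a longest directed path starting at `x`, provided `D` is acyclic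
(which bounds path lengths by `Fintype.card V`). -/
noncomputable def level [Fintype V] (D : V → V → Prop) (x : V) : ℕ :=
  Nat.findGreatest (StartsPath D x) (Fintype.card V)

variable [Fintype V] (hD : ¬ HasDCycle D)
include hD

theorem StartsPath.le_level {x : V} {n : ℕ} (h : StartsPath D x n) : n ≤ level D x := by
  classical
  exact Nat.le_findGreatest (h.le_card hD) h

theorem startsPath_level (x : V) : StartsPath D x (level D x) := by
  classical
  exact Nat.findGreatest_spec ((startsPath_one D x).le_card hD) (startsPath_one D x)

theorem one_le_level (x : V) : 1 ≤ level D x :=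
  (startsPath_one D x).le_level hD

theorem not_startsPath_level_succ (x : V) : ¬ StartsPath D x (level D x + 1) :=
  fun h => by have := h.le_level hD; omega

theorem InLevel.eq_level {x : V} {i : ℕ} (h : InLevel D x i) : i = level D x := by
  obtain ⟨hi, hi1⟩ := inLevel_iff.1 h
  exact le_antisymm (hi.le_level hD)
    (not_lt.1 fun hlt => hi1 ((startsPath_level hD x).mono i.succ_pos hlt))

theorem forall_not_rel_of_level_eq_one {x : V} (hx : level D x = 1) (y : V) : ¬ D x y :=
  fun hxy => by
    have := StartsPath.le_level hD (⟨[x, y], List.isChain_pair.2 hxy, rfl, rfl⟩ : StartsPath D x 2)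
    omega

theorem exists_isChain_level_getLast_eq_sink {r : V} (hr : ∀ x, (∀ y, ¬ D x y) → x = r)
    (x : V) : ∃ l : List V, l.IsChain D ∧ l.head? = some x ∧ l.getLast? = some r ∧
      l.length = level D x := by
  obtain ⟨l, hl, hx, hlen⟩ := startsPath_level hD x
  refine ⟨l, hl, hx, ?_, hlen⟩
  have hne : l ≠ [] := by rintro rfl; simp at hx
  rw [List.getLast?_eq_some_getLast hne, hr (l.getLast hne) fun y hy => ?_]
  refine not_startsPath_level_succ hD x
    ⟨l ++ [y], hl.append (.singleton y) ?_, ?_, by simp [hlen]⟩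
  · simpa [List.getLast?_eq_some_getLast hne] using hy
  · rwa [List.head?_append_of_ne_nil _ hne]

end Digraph

section Coloring

variable {V : Type} {D : V → V → Prop}

theorem List.IsChain.color_getElem {R : Type*} [AddMonoidWithOne R] {c : V → R}
    (hc : ∀ a b, D a b → c b = c a + 1) {l : List V} (hl : l.IsChain D) :
    ∀ (j : ℕ) (hj : j < l.length), c l[j] = c (l[0]'(by omega)) + j
  | 0, _ => by simp
  | j + 1, hj => by
    rw [hc _ _ (hl.getElem j hj), hl.color_getElem hc j (by omega), Nat.cast_succ, add_assoc]

theorem List.IsChain.color_getLast {R : Type*} [AddMonoidWithOne R] {c : V → R}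
    (hc : ∀ a b, D a b → c b = c a + 1) {l : List V} (hl : l.IsChain D) {x z : V}
    (hx : l.head? = some x) (hz : l.getLast? = some z) : c z = c x + (l.length - 1 : ℕ) := by
  obtain ⟨t, rfl⟩ := List.head?_eq_some_iff.1 hx
  obtain ⟨hlast, rfl⟩ := List.getElem?_eq_some_iff.1 (List.getLast?_eq_getElem? ▸ hz)
  exact hl.color_getElem hc _ hlast

theorem List.IsChain.map_nodup_of_length_le {n : ℕ} {c : V → ZMod n}
    (hc : ∀ a b, D a b → c b = c a + 1) {l : List V} (hl : l.IsChain D) (hlen : l.length ≤ n) :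
    (l.map c).Nodup := by
  rw [List.nodup_iff_injective_getElem]
  intro i j hij
  have hi : (i : ℕ) < l.length := by simpa using i.2
  have hj : (j : ℕ) < l.length := by simpa using j.2
  simp only [List.getElem_map] at hij
  rw [hl.color_getElem hc _ hi, hl.color_getElem hc _ hj, add_right_inj,
    ZMod.natCast_eq_natCast_iff', Nat.mod_eq_of_lt (by omega), Nat.mod_eq_of_lt (by omega)] at hij
  exact Fin.ext hij

end Coloring

theorem SimpleGraph.exists_walk_support_eq {V : Type} {G : SimpleGraph V} {l : List V}
    (hl : l.IsChain G.Adj) {x : V} (hx : l.head? = some x) :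
    ∃ (y : V) (p : G.Walk x y), p.support = l := by
  obtain ⟨t, rfl⟩ := List.head?_eq_some_iff.1 hx
  exact ⟨_, .ofSupport (x :: t) (List.cons_ne_nil x t) hl, SimpleGraph.Walk.support_ofSupport _ _⟩

theorem exists_colorful_walk_of_startsPath {V : Type} {G : SimpleGraph V} {D : V → V → Prop}
    {n : ℕ} {c : V → ZMod n} (hDG : ∀ a b, D a b → G.Adj a b)
    (hDc : ∀ a b, D a b → c b = c a + 1) {x : V} (hx : StartsPath D x n) :
    ∃ (y : V) (p : G.Walk x y), p.support.length = n ∧ (p.support.map c).Nodup := by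
  obtain ⟨l, hl, hlx, hlen⟩ := hx
  obtain ⟨y, p, rfl⟩ := SimpleGraph.exists_walk_support_eq (hl.imp hDG) hlx
  exact ⟨y, p, hlen, hl.map_nodup_of_length_le hDc hlen.le⟩

theorem SimpleGraph.pos_of_chromaticNumber_eq {V : Type} [Fintype V] [Nonempty V]
    {G : SimpleGraph V} {n : ℕ} (hn : G.chromaticNumber = n) : 0 < n := by
  exact_mod_cast hn ▸ G.colorable_of_fintype.chromaticNumber_pos

section Graph

variable {V : Type} [Fintype V] {G : SimpleGraph V} {D : V → V → Prop} {n : ℕ} {c : V → ZMod n}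
  {r : V}

theorem level_ne_of_adj (hc : ∀ u w, G.Adj u w → c u ≠ c w)
    (hDc : ∀ a b, D a b → c b = c a + 1) (hD : ¬ HasDCycle D)
    (hr : ∀ x, (∀ y, ¬ D x y) → x = r) {u v : V} (huv : G.Adj u v) : level D u ≠ level D v := by
  intro heq
  obtain ⟨l, hl, hlu, hlr, hllen⟩ := exists_isChain_level_getLast_eq_sink hD hr u
  obtain ⟨m, hm, hmv, hmr, hmlen⟩ := exists_isChain_level_getLast_eq_sink hD hr v
  have hcolor := (hl.color_getLast hDc hlu hlr).symm.trans (hm.color_getLast hDc hmv hmr)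
  rw [hllen, hmlen, heq, add_left_inj] at hcolor
  exact hc u v huv hcolor

theorem colorable_of_forall_level_le (hc : ∀ u w, G.Adj u w → c u ≠ c w)
    (hDc : ∀ a b, D a b → c b = c a + 1) (hD : ¬ HasDCycle D)
    (hr : ∀ x, (∀ y, ¬ D x y) → x = r) {k : ℕ} (hk : ∀ x, level D x ≤ k) : G.Colorable k := by
  refine ⟨.mk (fun x => ⟨level D x - 1, by have := one_le_level hD x; have := hk x; omega⟩)
    fun {u v} huv heq => level_ne_of_adj hc hDc hD hr huv ?_⟩
  have := one_le_level hD u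
  have := one_le_level hD v
  simp only [Fin.mk.injEq] at heq
  omega

theorem exists_isChain_length_getLast_eq_sink (hn : G.chromaticNumber = n)
    (hc : ∀ u w, G.Adj u w → c u ≠ c w) (hDc : ∀ a b, D a b → c b = c a + 1)
    (hD : ¬ HasDCycle D) (hr : ∀ x, (∀ y, ¬ D x y) → x = r) :
    ∃ l : List V, l.IsChain D ∧ l.length = n ∧ l.getLast? = some r := by
  obtain ⟨x, hx⟩ : ∃ x, n ≤ level D x := by
    by_contra! hlt
    have hle := (colorable_of_forall_level_le hc hDc hD hr fun x => Nat.le_sub_one_of_lt (hlt x))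
      |>.chromaticNumber_le
    rw [hn, Nat.cast_le] at hle
    have := hlt r
    omega
  obtain ⟨l, hl, -, hlr, hlen⟩ := exists_isChain_level_getLast_eq_sink hD hr x
  have : Nonempty V := ⟨r⟩
  have hn0 := G.pos_of_chromaticNumber_eq hn
  refine ⟨l.drop (level D x - n), hl.drop _, by simp; omega, ?_⟩
  rw [List.getLast?_drop, if_neg (by omega), hlr]

theorem exists_colorful_walk_from_sink (hn : G.chromaticNumber = n)
    (hc : ∀ u w, G.Adj u w → c u ≠ c w) (hDG : ∀ a b, D a b → G.Adj a b)
    (hDc : ∀ a b, D a b → c b = c a + 1) (hD : ¬ HasDCycle D)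
    (hr : ∀ x, (∀ y, ¬ D x y) → x = r) :
    ∃ (y : V) (p : G.Walk r y), p.support.length = n ∧ (p.support.map c).Nodup := by
  obtain ⟨l, hl, hlen, hlr⟩ := exists_isChain_length_getLast_eq_sink hn hc hDc hD hr
  have hrev : l.reverse.IsChain G.Adj :=
    List.isChain_reverse.2 (hl.imp fun a b h => (hDG a b h).symm)
  obtain ⟨y, p, hp⟩ := SimpleGraph.exists_walk_support_eq hrev (List.head?_reverse ▸ hlr)
  refine ⟨y, p, by simp [hp, hlen], ?_⟩
  rw [hp, List.map_reverse, List.nodup_reverse]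
  exact hl.map_nodup_of_length_le hDc hlen.le

end Graph

theorem Bc_in_middle_levels_general {V : Type} [Fintype V] (G : SimpleGraph V)
    (χ : ℕ) (hχ : G.chromaticNumber = χ)
    (c : V → ZMod χ) (hc : ∀ u w, G.Adj u w → c u ≠ c w)
    (hacyc : ¬ HasDCycle (fun a b => G.Adj a b ∧ c b = c a + 1))
    (r : V)
    (hru : ∀ x, (∀ y, ¬ (G.Adj x y ∧ c y = c x + 1)) → x = r) :
    (∀ (x : V) (i : ℕ), χ ≤ i →
        InLevel (fun a b => G.Adj a b ∧ c b = c a + 1) x i →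
        ∃ l : List V, l.Chain' (fun a b => G.Adj a b ∧ c b = c a + 1) ∧
          l.head? = some x ∧ l.length = χ) ∧
    (∀ x : V,
        (¬ ∃ (y : V) (p : G.Walk x y), p.support.length = χ ∧
            (p.support.map c).Nodup) →
        ∀ i : ℕ, InLevel (fun a b => G.Adj a b ∧ c b = c a + 1) x i →
          2 ≤ i ∧ i ≤ χ - 1) := by
  set D := fun a b => G.Adj a b ∧ c b = c a + 1
  have hDG : ∀ a b, D a b → G.Adj a b := fun _ _ h => h.1
  have hDc : ∀ a b, D a b → c b = c a + 1 := fun _ _ h => h.2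
  have : Nonempty V := ⟨r⟩
  have hχ0 := G.pos_of_chromaticNumber_eq hχ
  have high : ∀ x i, χ ≤ i → InLevel D x i → StartsPath D x χ :=
    fun x i hi hx => (inLevel_iff.1 hx).1.mono hχ0 hi
  refine ⟨high, fun x hx i hi => ⟨?_, ?_⟩⟩
  · by_contra hlt
    have hx1 : level D x = 1 := by
      have := hi.eq_level hacyc
      have := one_le_level hacyc x
      omega
    obtain rfl := hru x (forall_not_rel_of_level_eq_one hacyc hx1)
    exact hx (exists_colorful_walk_from_sink hχ hc hDG hDc hacyc hru)
  · by_contra hlt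
    exact hx (exists_colorful_walk_of_startsPath hDG hDc (high x i (by omega) hi))

/-- In a nice coloring, every vertex of level at least `χ` starts a directed
path on `χ` vertices of `D_c`, hence every vertex with no colorful path lies
in a level `i` with `2 ≤ i ≤ χ - 1`. -/
theorem Bc_in_middle_levels {V : Type} [Fintype V] (G : SimpleGraph V)
    (hG : G.Connected) (χ : ℕ) (hχ : G.chromaticNumber = χ)
    (c : V → ZMod χ) (hc : ∀ u w, G.Adj u w → c u ≠ c w)
    (hacyc : ¬ HasDCycle (fun a b => G.Adj a b ∧ c b = c a + 1))
    (r : V) (hr : ∀ y, ¬ (G.Adj r y ∧ c y = c r + 1))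
    (hru : ∀ x, (∀ y, ¬ (G.Adj x y ∧ c y = c x + 1)) → x = r) :
    (∀ (x : V) (i : ℕ), χ ≤ i →
        InLevel (fun a b => G.Adj a b ∧ c b = c a + 1) x i →
        ∃ l : List V, l.Chain' (fun a b => G.Adj a b ∧ c b = c a + 1) ∧
          l.head? = some x ∧ l.length = χ) ∧
    (∀ x : V,
        (¬ ∃ (y : V) (p : G.Walk x y), p.support.length = χ ∧
            (p.support.map c).Nodup) →
        ∀ i : ℕ, InLevel (fun a b => G.Adj a b ∧ c b = c a + 1) x i →
          2 ≤ i ∧ i ≤ χ - 1) :=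
  Bc_in_middle_levels_general G χ hχ c hc hacyc r hru
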